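/- For the query language CRPQ[=], PG-Keys ⊆ GGD: every PG-Key is equivalent to a GGD with at most two shared variables (a 2GGD). Concretely, a PG-Key with keyword MANDATORY is equivalent to a 1GGD obtained by adding the existence predicates ex(ν̄) to the target constraints; a PG-Key with keyword EXCLUSIVE is equivalent to the GGD whose source is the conjunction of two disjoint copies of scope and descriptor with the predicates ν̄ = ν̄' added to the source constraints and whose target is (∅, {x = x'}); and a PG-Key with keyword SINGLETON is equivalent to the GGD whose source is the scope conjoined with two disjoint copies of the descriptor with ex(ν̄) ∪ ex(ν̄') added to the source constraints and whose target is (∅, {ν̄ = ν̄'}). -/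

import Mathlib

namespace PGC

/-- Objects (vertex/edge identifiers). -/
abbrev Obj := ℕ
/-- Labels. -/
abbrev Lab := ℕ
/-- Property keys. -/
abbrev Key := ℕ
/-- Data values. -/
abbrev Val := ℕ
/-- Variables. -/
abbrev Var := ℕ

/-- A property graph `G = (V, E, η, λ, π)`. -/
structure PGraph where
  V : Finset Obj
  E : Finset Obj
  disj : Disjoint V E
  src : Obj → Obj
  tgt : Obj → Obj
  lab : Obj → Finset Lab
  prop : Obj → Key → Option Val
  src_mem : ∀ e ∈ E, src e ∈ V
  tgt_mem : ∀ e ∈ E, tgt e ∈ V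

/-- A walk (path), given by its start vertex and its list of edges. -/
structure Walk where
  start : Obj
  edges : List Obj
deriving DecidableEq

/-- The list of edges forms a walk in `G` starting at the given vertex. -/
def PGraph.walkFrom (G : PGraph) : Obj → List Obj → Prop
  | u, [] => u ∈ G.V
  | u, e :: es => e ∈ G.E ∧ G.src e = u ∧ G.walkFrom (G.tgt e) es

/-- The final vertex of a walk. -/
def Walk.endpt (G : PGraph) (w : Walk) : Obj :=
  w.edges.foldl (fun _ e => G.tgt e) w.start

/-- What a variable can be bound to: an object (vertex or edge) or a walk. -/
inductive Target where
  | obj (o : Obj)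
  | walk (w : Walk)
deriving DecidableEq

/-- Atoms of conjunctive (regular path) queries. -/
inductive Atom where
  | vertex (x : Var) (ls : List Lab)
  | edge (x e y : Var) (ls : List Lab)
  | path (x p y : Var) (r : RegularExpression Lab)

def Atom.vars : Atom → Finset Var
  | .vertex x _ => {x}
  | .edge x e y _ => {x, e, y}
  | .path x p y _ => {x, p, y}

def Atom.isPath : Atom → Prop
  | .path _ _ _ _ => True
  | _ => False

/-- A query is a finite conjunction of atoms. -/
abbrev Query := List Atom

/-- Variables of a query. -/
def qvars (Q : Query) : Finset Var := Q.foldr (fun a s => a.vars ∪ s) ∅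

/-- Satisfaction of an atom by an assignment `h` in a property graph. -/
def Atom.sat (G : PGraph) (h : Var → Target) : Atom → Prop
  | .vertex x ls => ∃ o, h x = .obj o ∧ o ∈ G.V ∧ ∀ l ∈ ls, l ∈ G.lab o
  | .edge x e y ls => ∃ ox oe oy, h x = .obj ox ∧ h e = .obj oe ∧ h y = .obj oy ∧
      oe ∈ G.E ∧ G.src oe = ox ∧ G.tgt oe = oy ∧ ∀ l ∈ ls, l ∈ G.lab oe
  | .path x p y r => ∃ ox w oy, h x = .obj ox ∧ h p = .walk w ∧ h y = .obj oy ∧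
      w.start = ox ∧ G.walkFrom ox w.edges ∧ Walk.endpt G w = oy ∧
      ∃ word : List Lab, word ∈ r.matches' ∧
        List.Forall₂ (fun e l => l ∈ G.lab e) w.edges word

/-- A match of a query `Q` over `G` (all-walk semantics). -/
def Match (G : PGraph) (Q : Query) (h : Var → Target) : Prop :=
  ∀ a ∈ Q, a.sat G h

/-- The property value `h(x).a`, if defined. -/
def propOf (G : PGraph) (h : Var → Target) (x : Var) (a : Key) : Option Val :=
  match h x with
  | .obj o => G.prop o a
  | .walk _ => none

/-- Data predicates. -/
inductive Pred where
  | propEq (x : Var) (a : Key) (y : Var) (b : Key)   -- x.a = y.b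
  | propEqC (x : Var) (a : Key) (c : Val)            -- x.a = c
  | ex (x : Var) (a : Key)                           -- ex(x.a)
  | idEq (x y : Var)                                 -- x = y
  | propNe (x : Var) (a : Key) (y : Var) (b : Key)   -- x.a ≠ y.b
  | propNeC (x : Var) (a : Key) (c : Val)            -- x.a ≠ c
  | idNe (x y : Var)                                 -- x ≠ y

/-- Satisfaction of a data predicate. -/
def Pred.sat (G : PGraph) (h : Var → Target) : Pred → Prop
  | .propEq x a y b => ∃ v, propOf G h x a = some v ∧ propOf G h y b = some v
  | .propEqC x a c => propOf G h x a = some c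
  | .ex x a => (propOf G h x a).isSome
  | .idEq x y => h x = h y
  | .propNe x a y b => ∃ v w, propOf G h x a = some v ∧ propOf G h y b = some w ∧ v ≠ w
  | .propNeC x a c => ∃ v, propOf G h x a = some v ∧ v ≠ c
  | .idNe x y => h x ≠ h y

def Pred.vars : Pred → Finset Var
  | .propEq x _ y _ => {x, y}
  | .propEqC x _ _ => {x}
  | .ex x _ => {x}
  | .idEq x y => {x, y}
  | .propNe x _ y _ => {x, y}
  | .propNeC x _ _ => {x}
  | .idNe x y => {x, y}

/-- `h ⊨ C`: every predicate of `C` holds under `h`. -/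
def satC (G : PGraph) (h : Var → Target) (C : List Pred) : Prop :=
  ∀ p ∈ C, p.sat G h

/-- A predicate uses only equality (no inequality). -/
def Pred.isEq : Pred → Prop
  | .propEq _ _ _ _ => True
  | .propEqC _ _ _ => True
  | .ex _ _ => True
  | .idEq _ _ => True
  | _ => False

/-- A predicate is an equality with a constant. -/
def Pred.isEqC : Pred → Prop
  | .propEqC _ _ _ => True
  | _ => False

/-- A query language: whether path atoms are allowed, and which data predicates are allowed. -/
structure QLang where
  allowPaths : Bool
  allowPred : Pred → Prop

/-- CQ[=] -/
def CQeq : QLang := ⟨false, Pred.isEq⟩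
/-- CQ[=,≠] -/
def CQeqNe : QLang := ⟨false, fun _ => True⟩
/-- CRPQ[=] -/
def CRPQeq : QLang := ⟨true, Pred.isEq⟩
/-- CRPQ[=,≠] -/
def CRPQeqNe : QLang := ⟨true, fun _ => True⟩
/-- CRPQ[=_c] -/
def CRPQeqC : QLang := ⟨true, Pred.isEqC⟩

/-- The query belongs to the query language. -/
def QueryIn (L : QLang) (Q : Query) : Prop :=
  ∀ a ∈ Q, a.isPath → L.allowPaths = true

/-- All predicates belong to the query language. -/
def PredsIn (L : QLang) (C : List Pred) : Prop :=
  ∀ p ∈ C, L.allowPred p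

/-- Graph functional dependency `(Q(x̄,ȳ), C_s(x̄,ȳ) ⇒ C_t(x̄))`. -/
structure GFD where
  shared : List Var
  Q : Query
  Cs : List Pred
  Ct : List Pred

def GFD.wf (L : QLang) (φ : GFD) : Prop :=
  QueryIn L φ.Q ∧ PredsIn L φ.Cs ∧ PredsIn L φ.Ct ∧
  φ.shared.toFinset ⊆ qvars φ.Q ∧
  (∀ p ∈ φ.Ct, p.vars ⊆ φ.shared.toFinset) ∧
  (∀ p ∈ φ.Cs, p.vars ⊆ qvars φ.Q)

def GFD.sat (φ : GFD) (G : PGraph) : Prop :=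
  ∀ h, Match G φ.Q h → satC G h φ.Cs → satC G h φ.Ct

def GFD.allVars (φ : GFD) : Finset Var :=
  qvars φ.Q ∪ φ.shared.toFinset ∪ (φ.Cs ++ φ.Ct).foldr (fun p s => p.vars ∪ s) ∅

/-- Graph generating dependency `(Q_s(x̄,ȳ), C_s(x̄,ȳ) ⇒ Q_t(x̄,z̄), C_t(x̄,z̄))`. -/
structure GGD where
  shared : List Var
  Qs : Query
  Cs : List Pred
  Qt : Query
  Ct : List Pred

def GGD.wf (L : QLang) (φ : GGD) : Prop :=
  QueryIn L φ.Qs ∧ QueryIn L φ.Qt ∧ PredsIn L φ.Cs ∧ PredsIn L φ.Ct ∧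
  φ.shared.toFinset ⊆ qvars φ.Qs ∧
  qvars φ.Qs ∩ qvars φ.Qt ⊆ φ.shared.toFinset ∧
  (∀ p ∈ φ.Cs, p.vars ⊆ qvars φ.Qs) ∧
  (∀ p ∈ φ.Ct, p.vars ⊆ qvars φ.Qt ∪ φ.shared.toFinset)

def GGD.sat (φ : GGD) (G : PGraph) : Prop :=
  ∀ hs, Match G φ.Qs hs → satC G hs φ.Cs →
    ∃ ht, Match G φ.Qt ht ∧ (∀ v ∈ φ.shared, ht v = hs v) ∧ satC G ht φ.Ct

/-- Assertion keywords of PG-Keys. -/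
inductive KW where
  | mandatory
  | exclusive
  | singleton
deriving DecidableEq

/-- Entries of a key expression: a variable or a property reference `v.a`. -/
inductive KeyExpr where
  | var (v : Var)
  | ref (v : Var) (a : Key)

def KeyExpr.vars : KeyExpr → Finset Var
  | .var v => {v}
  | .ref v _ => {v}

/-- Value of a key-expression entry under a match, if defined. -/
def KeyExpr.eval (G : PGraph) (h : Var → Target) : KeyExpr → Option (Target ⊕ Val)
  | .var v => some (Sum.inl (h v))
  | .ref v a => (propOf G h v a).map Sum.inr

def keysDefined (G : PGraph) (h : Var → Target) (ks : List KeyExpr) : Prop :=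
  ∀ k ∈ ks, (KeyExpr.eval G h k).isSome

def keysEq (G : PGraph) (h h' : Var → Target) (ks : List KeyExpr) : Prop :=
  ∀ k ∈ ks, KeyExpr.eval G h k = KeyExpr.eval G h' k

/-- A PG-Key `(Q_s(x,ȳ), C_s ⇒ α(ν̄), Q_t(x,z̄), C_t)`. -/
structure PGKey where
  x : Var
  Qs : Query
  Cs : List Pred
  kw : KW
  keys : List KeyExpr
  Qt : Query
  Ct : List Pred

def PGKey.wf (L : QLang) (ψ : PGKey) : Prop :=
  QueryIn L ψ.Qs ∧ QueryIn L ψ.Qt ∧ PredsIn L ψ.Cs ∧ PredsIn L ψ.Ct ∧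
  ψ.x ∈ qvars ψ.Qs ∧ ψ.x ∈ qvars ψ.Qt ∧
  qvars ψ.Qs ∩ qvars ψ.Qt = {ψ.x} ∧
  (∀ p ∈ ψ.Cs, p.vars ⊆ qvars ψ.Qs) ∧
  (∀ p ∈ ψ.Ct, p.vars ⊆ qvars ψ.Qt) ∧
  (∀ k ∈ ψ.keys, k.vars ⊆ qvars ψ.Qt)

def PGKey.sat (ψ : PGKey) (G : PGraph) : Prop :=
  match ψ.kw with
  | .mandatory =>
      ∀ hs, Match G ψ.Qs hs → satC G hs ψ.Cs →
        ∃ ht, Match G ψ.Qt ht ∧ ht ψ.x = hs ψ.x ∧ satC G ht ψ.Ct ∧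
          keysDefined G ht ψ.keys
  | .singleton =>
      ∀ hs, Match G ψ.Qs hs → satC G hs ψ.Cs →
        ∀ ht ht', Match G ψ.Qt ht → satC G ht ψ.Ct → ht ψ.x = hs ψ.x →
          Match G ψ.Qt ht' → satC G ht' ψ.Ct → ht' ψ.x = hs ψ.x →
          keysDefined G ht ψ.keys → keysDefined G ht' ψ.keys →
          keysEq G ht ht' ψ.keys
  | .exclusive =>
      ∀ hs hs', Match G ψ.Qs hs → satC G hs ψ.Cs →
        Match G ψ.Qs hs' → satC G hs' ψ.Cs →
        ∀ ht ht', Match G ψ.Qt ht → satC G ht ψ.Ct → ht ψ.x = hs ψ.x →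
          Match G ψ.Qt ht' → satC G ht' ψ.Ct → ht' ψ.x = hs' ψ.x →
          keysDefined G ht ψ.keys → keysDefined G ht' ψ.keys →
          keysEq G ht ht' ψ.keys →
          hs ψ.x = hs' ψ.x

def PGKey.allVars (ψ : PGKey) : Finset Var :=
  qvars ψ.Qs ∪ qvars ψ.Qt ∪
  (ψ.Cs ++ ψ.Ct).foldr (fun p s => p.vars ∪ s) ∅ ∪
  ψ.keys.foldr (fun k s => k.vars ∪ s) ∅ ∪ {ψ.x}

/-- Variable renaming on atoms, queries, predicates and key expressions. -/
def Atom.rename (σ : Var → Var) : Atom → Atom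
  | .vertex x ls => .vertex (σ x) ls
  | .edge x e y ls => .edge (σ x) (σ e) (σ y) ls
  | .path x p y r => .path (σ x) (σ p) (σ y) r

def Query.rename (σ : Var → Var) (Q : Query) : Query := Q.map (Atom.rename σ)

def Pred.rename (σ : Var → Var) : Pred → Pred
  | .propEq x a y b => .propEq (σ x) a (σ y) b
  | .propEqC x a c => .propEqC (σ x) a c
  | .ex x a => .ex (σ x) a
  | .idEq x y => .idEq (σ x) (σ y)
  | .propNe x a y b => .propNe (σ x) a (σ y) b
  | .propNeC x a c => .propNeC (σ x) a c
  | .idNe x y => .idNe (σ x) (σ y)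

def KeyExpr.rename (σ : Var → Var) : KeyExpr → KeyExpr
  | .var v => .var (σ v)
  | .ref v a => .ref (σ v) a

/-- The existence predicates `ex(ν̄)` associated with a key expression. -/
def exPreds (ks : List KeyExpr) : List Pred :=
  ks.filterMap fun k =>
    match k with
    | .var _ => none
    | .ref v a => some (.ex v a)

/-- The predicate expressing equality of a key-expression entry with its `σ`-copy. -/
def keyEqPred (σ : Var → Var) : KeyExpr → Pred
  | .var v => .idEq v (σ v)
  | .ref v a => .propEq v a (σ v) a

/-- The renaming that fixes `x` and otherwise applies `σ`. -/
def fixAt (x : Var) (σ : Var → Var) : Var → Var :=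
  fun v => if v = x then x else σ v

/-- `G'` is an induced subgraph of `G`. -/
def InducedSubgraph (G' G : PGraph) : Prop :=
  G'.V ⊆ G.V ∧
  G'.E = G.E.filter (fun e => G.src e ∈ G'.V ∧ G.tgt e ∈ G'.V) ∧
  ∀ o ∈ G'.V ∪ G'.E, G'.src o = G.src o ∧ G'.tgt o = G.tgt o ∧
    G'.lab o = G.lab o ∧ ∀ k, G'.prop o k = G.prop o k

/-- A constraint (given by its satisfaction relation) is expressible by a
finite set of constraints of the class `C`. -/
def Expressible (s : PGraph → Prop) (C : Set (PGraph → Prop)) : Prop :=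
  ∃ Ψ : List (PGraph → Prop), (∀ ψ ∈ Ψ, ψ ∈ C) ∧ ∀ G, s G ↔ ∀ ψ ∈ Ψ, ψ G

/-- Expressiveness inclusion of constraint classes. -/
def ClassLE (C₁ C₂ : Set (PGraph → Prop)) : Prop :=
  ∀ s ∈ C₁, Expressible s C₂

/-- Equal expressive power. -/
def ClassEquiv (C₁ C₂ : Set (PGraph → Prop)) : Prop :=
  ClassLE C₁ C₂ ∧ ClassLE C₂ C₁

/-- Strict expressiveness inclusion. -/
def ClassLT (C₁ C₂ : Set (PGraph → Prop)) : Prop :=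
  ClassLE C₁ C₂ ∧ ∃ s ∈ C₂, ¬ Expressible s C₁

/-- The class GFD over the query language `L`. -/
def GFDc (L : QLang) : Set (PGraph → Prop) :=
  {s | ∃ φ : GFD, φ.wf L ∧ s = φ.sat}

/-- The class nGFD over `L`. -/
def nGFDc (n : ℕ) (L : QLang) : Set (PGraph → Prop) :=
  {s | ∃ φ : GFD, φ.wf L ∧ φ.shared.length ≤ n ∧ s = φ.sat}

/-- The class GGD over `L`. -/
def GGDc (L : QLang) : Set (PGraph → Prop) :=
  {s | ∃ φ : GGD, φ.wf L ∧ s = φ.sat}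

/-- The class nGGD over `L`. -/
def nGGDc (n : ℕ) (L : QLang) : Set (PGraph → Prop) :=
  {s | ∃ φ : GGD, φ.wf L ∧ φ.shared.length ≤ n ∧ s = φ.sat}

/-- The class PG-Keys over `L`. -/
def PGKc (L : QLang) : Set (PGraph → Prop) :=
  {s | ∃ ψ : PGKey, ψ.wf L ∧ s = ψ.sat}

/-- The class mPG-Keys over `L`. -/
def mPGKc (L : QLang) : Set (PGraph → Prop) :=
  {s | ∃ ψ : PGKey, ψ.wf L ∧ ψ.kw = KW.mandatory ∧ s = ψ.sat}


/-- Translation of a MANDATORY PG-Key into a 1GGD. -/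
def mandatoryGGD (ψ : PGKey) : GGD :=
  ⟨[ψ.x], ψ.Qs, ψ.Cs, ψ.Qt, ψ.Ct ++ exPreds ψ.keys⟩

/-- Translation of an EXCLUSIVE PG-Key into a GGD: the source is the conjunction of
two disjoint copies of scope and descriptor, with `ν̄ = ν̄'` added to the source
constraints, and the target is `(∅, {x = x'})`. -/
def exclusiveGGD (ψ : PGKey) (σ : Var → Var) : GGD :=
  ⟨[ψ.x, σ ψ.x],
   ψ.Qs ++ Query.rename σ ψ.Qs ++ ψ.Qt ++ Query.rename σ ψ.Qt,
   ψ.Cs ++ ψ.Cs.map (Pred.rename σ) ++ ψ.Ct ++ ψ.Ct.map (Pred.rename σ)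
     ++ ψ.keys.map (keyEqPred σ),
   [],
   [Pred.idEq ψ.x (σ ψ.x)]⟩

/-- The variables occurring in a key expression, in order. -/
def keyVarList (ks : List KeyExpr) : List Var :=
  ks.map fun k => match k with | .var v => v | .ref v _ => v

/-- Translation of a SINGLETON PG-Key into a GGD: the source is the scope conjoined
with two disjoint copies of the descriptor (both sharing `x` with the scope), with
`ex(ν̄) ∪ ex(ν̄')` added to the source constraints, and the target is `(∅, {ν̄ = ν̄'})`. -/
def singletonGGD (ψ : PGKey) (σ : Var → Var) : GGD :=
  ⟨keyVarList ψ.keys ++ (keyVarList ψ.keys).map (fixAt ψ.x σ),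
   ψ.Qs ++ ψ.Qt ++ Query.rename (fixAt ψ.x σ) ψ.Qt,
   ψ.Cs ++ ψ.Ct ++ ψ.Ct.map (Pred.rename (fixAt ψ.x σ))
     ++ exPreds ψ.keys ++ exPreds (ψ.keys.map (KeyExpr.rename (fixAt ψ.x σ))),
   [],
   ψ.keys.map (keyEqPred (fixAt ψ.x σ))⟩

/-! ### Auxiliary lemmas -/

lemma satC_append {G : PGraph} {h : Var → Target} {C₁ C₂ : List Pred} :
    satC G h (C₁ ++ C₂) ↔ satC G h C₁ ∧ satC G h C₂ := by
  simp [satC, List.mem_append, or_imp, forall_and]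

lemma qvars_nil : qvars ([] : Query) = ∅ := rfl

lemma qvars_cons (a : Atom) (Q : Query) : qvars (a :: Q) = a.vars ∪ qvars Q := rfl

lemma qvars_append (Q₁ Q₂ : Query) : qvars (Q₁ ++ Q₂) = qvars Q₁ ∪ qvars Q₂ := by
  induction Q₁ with
  | nil => simp [qvars_nil]
  | cons a Q ih => simp [qvars_cons, ih, Finset.union_assoc]

lemma mem_qvars {v : Var} {Q : Query} : v ∈ qvars Q ↔ ∃ a ∈ Q, v ∈ a.vars := by
  induction Q with
  | nil => simp [qvars_nil]
  | cons a Q ih => simp [qvars_cons, ih, Finset.mem_union]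

lemma vars_subset_qvars {a : Atom} {Q : Query} (ha : a ∈ Q) : a.vars ⊆ qvars Q :=
  fun v hv => mem_qvars.mpr ⟨a, ha, hv⟩

lemma Atom.vars_rename (σ : Var → Var) (a : Atom) :
    (Atom.rename σ a).vars = a.vars.image σ := by
  cases a <;> simp [Atom.rename, Atom.vars, Finset.image_insert]

lemma qvars_rename (σ : Var → Var) (Q : Query) :
    qvars (Query.rename σ Q) = (qvars Q).image σ := by
  induction Q with
  | nil => simp [Query.rename, qvars_nil]
  | cons a Q ih =>
      simp [Query.rename, qvars_cons, Atom.vars_rename, Finset.image_union] at *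
      rw [ih]

lemma Atom.sat_rename {G : PGraph} {h : Var → Target} (σ : Var → Var) (a : Atom) :
    (Atom.rename σ a).sat G h ↔ a.sat G (fun v => h (σ v)) := by
  cases a <;> rfl

lemma Match_append {G : PGraph} {h : Var → Target} {Q₁ Q₂ : Query} :
    Match G (Q₁ ++ Q₂) h ↔ Match G Q₁ h ∧ Match G Q₂ h := by
  simp [Match, List.mem_append, or_imp, forall_and]

lemma Match_rename {G : PGraph} {h : Var → Target} (σ : Var → Var) (Q : Query) :
    Match G (Query.rename σ Q) h ↔ Match G Q (fun v => h (σ v)) := by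
  simp only [Match, Query.rename, List.mem_map]
  constructor
  · intro H a ha; exact (Atom.sat_rename σ a).mp (H _ ⟨a, ha, rfl⟩)
  · rintro H _ ⟨a, ha, rfl⟩; exact (Atom.sat_rename σ a).mpr (H a ha)

lemma Pred.sat_rename {G : PGraph} {h : Var → Target} (σ : Var → Var) (p : Pred) :
    (Pred.rename σ p).sat G h ↔ p.sat G (fun v => h (σ v)) := by
  cases p <;> rfl

lemma satC_map_rename {G : PGraph} {h : Var → Target} (σ : Var → Var) (C : List Pred) :
    satC G h (C.map (Pred.rename σ)) ↔ satC G (fun v => h (σ v)) C := by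
  simp only [satC, List.mem_map]
  constructor
  · intro H p hp; exact (Pred.sat_rename σ p).mp (H _ ⟨p, hp, rfl⟩)
  · rintro H _ ⟨p, hp, rfl⟩; exact (Pred.sat_rename σ p).mpr (H p hp)

lemma Pred.vars_rename (σ : Var → Var) (p : Pred) :
    (Pred.rename σ p).vars = p.vars.image σ := by
  cases p <;> simp [Pred.rename, Pred.vars, Finset.image_insert]

lemma KeyExpr.eval_rename {G : PGraph} {h : Var → Target} (σ : Var → Var) (k : KeyExpr) :
    (KeyExpr.rename σ k).eval G h = k.eval G (fun v => h (σ v)) := by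
  cases k <;> rfl

lemma propOf_congr' {G : PGraph} {h h' : Var → Target} {x y : Var} (a : Key)
    (e : h x = h' y) : propOf G h x a = propOf G h' y a := by
  simp [propOf, e]

lemma propOf_congr {G : PGraph} {h h' : Var → Target} {x : Var} (a : Key)
    (e : h x = h' x) : propOf G h x a = propOf G h' x a := propOf_congr' a e

lemma Atom.sat_congr {G : PGraph} {h h' : Var → Target} {a : Atom}
    (e : ∀ v ∈ a.vars, h v = h' v) : a.sat G h ↔ a.sat G h' := by
  cases a with
  | vertex x ls =>
      simp only [Atom.vars, Finset.mem_singleton] at e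
      simp only [Atom.sat, e x rfl]
  | edge x ed y ls =>
      simp only [Atom.vars, Finset.mem_insert, Finset.mem_singleton] at e
      simp only [Atom.sat, e x (Or.inl rfl), e ed (Or.inr (Or.inl rfl)),
        e y (Or.inr (Or.inr rfl))]
  | path x p y r =>
      simp only [Atom.vars, Finset.mem_insert, Finset.mem_singleton] at e
      simp only [Atom.sat, e x (Or.inl rfl), e p (Or.inr (Or.inl rfl)),
        e y (Or.inr (Or.inr rfl))]

lemma Pred.sat_congr {G : PGraph} {h h' : Var → Target} {p : Pred}
    (e : ∀ v ∈ p.vars, h v = h' v) : p.sat G h ↔ p.sat G h' := by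
  cases p with
  | propEq x a y b =>
      simp only [Pred.vars, Finset.mem_insert, Finset.mem_singleton] at e
      simp only [Pred.sat, propOf_congr a (e x (Or.inl rfl)),
        propOf_congr b (e y (Or.inr rfl))]
  | propEqC x a c =>
      simp only [Pred.vars, Finset.mem_singleton] at e
      simp only [Pred.sat, propOf_congr a (e x rfl)]
  | ex x a =>
      simp only [Pred.vars, Finset.mem_singleton] at e
      simp only [Pred.sat, propOf_congr a (e x rfl)]
  | idEq x y =>
      simp only [Pred.vars, Finset.mem_insert, Finset.mem_singleton] at e
      simp only [Pred.sat, e x (Or.inl rfl), e y (Or.inr rfl)]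
  | propNe x a y b =>
      simp only [Pred.vars, Finset.mem_insert, Finset.mem_singleton] at e
      simp only [Pred.sat, propOf_congr a (e x (Or.inl rfl)),
        propOf_congr b (e y (Or.inr rfl))]
  | propNeC x a c =>
      simp only [Pred.vars, Finset.mem_singleton] at e
      simp only [Pred.sat, propOf_congr a (e x rfl)]
  | idNe x y =>
      simp only [Pred.vars, Finset.mem_insert, Finset.mem_singleton] at e
      simp only [Pred.sat, e x (Or.inl rfl), e y (Or.inr rfl)]

lemma Match_congr {G : PGraph} {h h' : Var → Target} {Q : Query}
    (e : ∀ v ∈ qvars Q, h v = h' v) : Match G Q h ↔ Match G Q h' := by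
  unfold Match
  exact forall₂_congr fun a ha =>
    Atom.sat_congr (fun v hv => e v (vars_subset_qvars ha hv))

lemma satC_congr {G : PGraph} {h h' : Var → Target} {C : List Pred}
    (e : ∀ p ∈ C, ∀ v ∈ p.vars, h v = h' v) : satC G h C ↔ satC G h' C := by
  unfold satC
  exact forall₂_congr fun p hp => Pred.sat_congr (e p hp)

lemma KeyExpr.eval_congr {G : PGraph} {h h' : Var → Target} {k : KeyExpr}
    (e : ∀ v ∈ k.vars, h v = h' v) : k.eval G h = k.eval G h' := by
  cases k with
  | var v =>
      simp only [KeyExpr.vars, Finset.mem_singleton] at e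
      simp [KeyExpr.eval, e v rfl]
  | ref v a =>
      simp only [KeyExpr.vars, Finset.mem_singleton] at e
      simp [KeyExpr.eval, propOf_congr a (e v rfl)]

lemma mem_exPreds {p : Pred} {ks : List KeyExpr} :
    p ∈ exPreds ks ↔ ∃ v a, KeyExpr.ref v a ∈ ks ∧ p = Pred.ex v a := by
  simp only [exPreds, List.mem_filterMap]
  constructor
  · rintro ⟨k, hk, he⟩
    cases k with
    | var v => simp at he
    | ref v a => exact ⟨v, a, hk, by simpa using he.symm⟩
  · rintro ⟨v, a, hk, rfl⟩; exact ⟨.ref v a, hk, rfl⟩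

lemma keysDefined_iff_satC {G : PGraph} {h : Var → Target} {ks : List KeyExpr} :
    keysDefined G h ks ↔ satC G h (exPreds ks) := by
  constructor
  · intro hd p hp
    obtain ⟨v, a, hk, rfl⟩ := mem_exPreds.mp hp
    have := hd _ hk
    simpa [KeyExpr.eval, Pred.sat, Option.isSome_map] using this
  · intro hc k hk
    cases k with
    | var v => simp [KeyExpr.eval]
    | ref v a =>
        have := hc (.ex v a) (mem_exPreds.mpr ⟨v, a, hk, rfl⟩)
        simpa [KeyExpr.eval, Pred.sat, Option.isSome_map] using this

lemma exPreds_map_rename (σ : Var → Var) (ks : List KeyExpr) :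
    exPreds (ks.map (KeyExpr.rename σ)) = (exPreds ks).map (Pred.rename σ) := by
  induction ks with
  | nil => rfl
  | cons k ks ih => cases k <;> simp [exPreds, KeyExpr.rename, Pred.rename] at * <;>
      simpa [exPreds] using ih
lemma Match_nil {G : PGraph} {h : Var → Target} : Match G [] h := by
  intro a ha; simp at ha

lemma ggd_empty_target_sat (φ : GGD) (hQ : φ.Qt = [])
    (hvars : ∀ p ∈ φ.Ct, p.vars ⊆ φ.shared.toFinset) (G : PGraph) :
    φ.sat G ↔ ∀ h, Match G φ.Qs h → satC G h φ.Cs → satC G h φ.Ct := by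
  constructor
  · intro hsat h hm hc
    obtain ⟨ht, _, hag, hct⟩ := hsat h hm hc
    intro p hp
    exact (Pred.sat_congr (fun v hv =>
      hag v (List.mem_toFinset.mp (hvars p hp hv)))).mp (hct p hp)
  · intro H h hm hc
    exact ⟨h, by rw [hQ]; exact Match_nil, fun v _ => rfl, H h hm hc⟩

lemma Pred.isEq_rename {σ : Var → Var} {p : Pred} (h : p.isEq) : (Pred.rename σ p).isEq := by
  cases p <;> simpa [Pred.rename, Pred.isEq] using h

lemma Atom.isPath_rename {σ : Var → Var} {a : Atom} (h : (Atom.rename σ a).isPath) : a.isPath := by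
  cases a <;> simpa [Atom.rename, Atom.isPath] using h

lemma keyEqPred_isEq (σ : Var → Var) (k : KeyExpr) : (keyEqPred σ k).isEq := by
  cases k <;> simp [keyEqPred, Pred.isEq]

lemma exPreds_isEq {p : Pred} {ks : List KeyExpr} (hp : p ∈ exPreds ks) : p.isEq := by
  obtain ⟨v, a, _, rfl⟩ := mem_exPreds.mp hp
  simp [Pred.isEq]

lemma QueryIn_CRPQeq (Q : Query) : QueryIn CRPQeq Q := by
  intro a _ _; rfl

def keyVar : KeyExpr → Var
  | .var v => v
  | .ref v _ => v

lemma keyEqPred_vars (σ : Var → Var) (k : KeyExpr) :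
    (keyEqPred σ k).vars = {keyVar k, σ (keyVar k)} := by
  cases k <;> rfl

lemma KeyExpr.vars_eq (k : KeyExpr) : k.vars = {keyVar k} := by
  cases k <;> rfl

lemma keyVar_mem_keyVarList {k : KeyExpr} {ks : List KeyExpr} (h : k ∈ ks) :
    keyVar k ∈ keyVarList ks := by
  simp only [keyVarList, List.mem_map]
  exact ⟨k, h, by cases k <;> rfl⟩
lemma sat_mandatory_iff {ψ : PGKey} (hkw : ψ.kw = KW.mandatory) (G : PGraph) :
    ψ.sat G ↔
      ∀ hs, Match G ψ.Qs hs → satC G hs ψ.Cs →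
        ∃ ht, Match G ψ.Qt ht ∧ ht ψ.x = hs ψ.x ∧ satC G ht ψ.Ct ∧
          keysDefined G ht ψ.keys := by
  obtain ⟨x, Qs, Cs, kw, keys, Qt, Ct⟩ := ψ
  subst hkw; rfl

lemma sat_exclusive_iff {ψ : PGKey} (hkw : ψ.kw = KW.exclusive) (G : PGraph) :
    ψ.sat G ↔
      ∀ hs hs', Match G ψ.Qs hs → satC G hs ψ.Cs →
        Match G ψ.Qs hs' → satC G hs' ψ.Cs →
        ∀ ht ht', Match G ψ.Qt ht → satC G ht ψ.Ct → ht ψ.x = hs ψ.x →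
          Match G ψ.Qt ht' → satC G ht' ψ.Ct → ht' ψ.x = hs' ψ.x →
          keysDefined G ht ψ.keys → keysDefined G ht' ψ.keys →
          keysEq G ht ht' ψ.keys →
          hs ψ.x = hs' ψ.x := by
  obtain ⟨x, Qs, Cs, kw, keys, Qt, Ct⟩ := ψ
  subst hkw; rfl

lemma sat_singleton_iff {ψ : PGKey} (hkw : ψ.kw = KW.singleton) (G : PGraph) :
    ψ.sat G ↔
      ∀ hs, Match G ψ.Qs hs → satC G hs ψ.Cs →
        ∀ ht ht', Match G ψ.Qt ht → satC G ht ψ.Ct → ht ψ.x = hs ψ.x →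
          Match G ψ.Qt ht' → satC G ht' ψ.Ct → ht' ψ.x = hs ψ.x →
          keysDefined G ht ψ.keys → keysDefined G ht' ψ.keys →
          keysEq G ht ht' ψ.keys := by
  obtain ⟨x, Qs, Cs, kw, keys, Qt, Ct⟩ := ψ
  subst hkw; rfl

lemma mandatory_equiv (ψ : PGKey) (hkw : ψ.kw = KW.mandatory) (G : PGraph) :
    ψ.sat G ↔ (mandatoryGGD ψ).sat G := by
  rw [sat_mandatory_iff hkw]
  unfold GGD.sat mandatoryGGD
  constructor
  · intro H hs hm hc
    obtain ⟨ht, h1, h2, h3, h4⟩ := H hs hm hc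
    refine ⟨ht, h1, ?_, satC_append.mpr ⟨h3, keysDefined_iff_satC.mp h4⟩⟩
    intro v hv
    simp only [List.mem_singleton] at hv
    subst hv; exact h2
  · intro H hs hm hc
    obtain ⟨ht, h1, h2, h3⟩ := H hs hm hc
    obtain ⟨h3a, h3b⟩ := satC_append.mp h3
    exact ⟨ht, h1, h2 _ (by simp), h3a, keysDefined_iff_satC.mpr h3b⟩

lemma exclusiveGGD_reduced (ψ : PGKey) (σ : Var → Var) (G : PGraph) :
    (exclusiveGGD ψ σ).sat G ↔
      ∀ h, Match G (exclusiveGGD ψ σ).Qs h → satC G h (exclusiveGGD ψ σ).Cs →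
        h ψ.x = h (σ ψ.x) := by
  rw [ggd_empty_target_sat _ rfl (by
    intro p hp
    simp only [exclusiveGGD, List.mem_singleton] at hp
    subst hp
    intro v hv
    simp only [Pred.vars, Finset.mem_insert, Finset.mem_singleton] at hv
    simp only [exclusiveGGD, List.toFinset_cons, List.toFinset_nil,
      List.mem_toFinset, insert_empty_eq, Finset.mem_insert, Finset.mem_singleton]
    tauto)]
  exact forall_congr' fun h => imp_congr_right fun _ => imp_congr_right fun _ => by
    simp [exclusiveGGD, satC, Pred.sat]

lemma singletonGGD_reduced (ψ : PGKey) (σ : Var → Var) (G : PGraph) :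
    (singletonGGD ψ σ).sat G ↔
      ∀ h, Match G (singletonGGD ψ σ).Qs h → satC G h (singletonGGD ψ σ).Cs →
        satC G h ((singletonGGD ψ σ).Ct) := by
  refine ggd_empty_target_sat _ rfl ?_ G
  intro p hp
  simp only [singletonGGD, List.mem_map] at hp
  obtain ⟨k, hk, rfl⟩ := hp
  rw [keyEqPred_vars]
  intro v hv
  simp only [Finset.mem_insert, Finset.mem_singleton] at hv
  simp only [singletonGGD, List.toFinset_append, Finset.mem_union, List.mem_toFinset,
    List.mem_map]
  rcases hv with rfl | rfl
  · exact Or.inl (keyVar_mem_keyVarList hk)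
  · exact Or.inr ⟨keyVar k, keyVar_mem_keyVarList hk, rfl⟩

/-- Per-key variant of the singleton translation: a 2GGD. -/
def singletonGGD1 (ψ : PGKey) (σ : Var → Var) (k : KeyExpr) : GGD :=
  ⟨[keyVar k, fixAt ψ.x σ (keyVar k)],
   (singletonGGD ψ σ).Qs, (singletonGGD ψ σ).Cs, [],
   [keyEqPred (fixAt ψ.x σ) k]⟩

lemma singletonGGD1_reduced (ψ : PGKey) (σ : Var → Var) (k : KeyExpr) (G : PGraph) :
    (singletonGGD1 ψ σ k).sat G ↔
      ∀ h, Match G (singletonGGD ψ σ).Qs h → satC G h (singletonGGD ψ σ).Cs →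
        (keyEqPred (fixAt ψ.x σ) k).sat G h := by
  rw [ggd_empty_target_sat _ rfl (by
    intro p hp
    simp only [singletonGGD1, List.mem_singleton] at hp
    subst hp
    rw [keyEqPred_vars]
    intro v hv
    simp only [Finset.mem_insert, Finset.mem_singleton] at hv
    simp only [singletonGGD1, List.toFinset_cons, List.toFinset_nil,
      List.mem_toFinset, insert_empty_eq, Finset.mem_insert, Finset.mem_singleton]
    tauto)]
  exact forall_congr' fun h => imp_congr_right fun _ => imp_congr_right fun _ => by
    simp [singletonGGD1, satC]

lemma exists_fresh (ψ : PGKey) :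
    ∃ σ : Var → Var, Function.Injective σ ∧ ∀ v, σ v ∉ ψ.allVars := by
  refine ⟨fun v => v + (ψ.allVars.sup id + 1), ?_, ?_⟩
  · intro a b h
    simpa using h
  · intro v hv
    have hv' : v + (ψ.allVars.sup id + 1) ∈ ψ.allVars := hv
    have h2 : id (v + (ψ.allVars.sup id + 1)) ≤ ψ.allVars.sup id := Finset.le_sup hv'
    simp only [id_eq] at h2
    exact Nat.not_succ_le_self _ (le_trans (Nat.le_add_left _ v) h2)

lemma qvars_Qs_subset (ψ : PGKey) : qvars ψ.Qs ⊆ ψ.allVars := by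
  intro v hv
  simp only [PGKey.allVars, Finset.mem_union]
  tauto

lemma qvars_Qt_subset (ψ : PGKey) : qvars ψ.Qt ⊆ ψ.allVars := by
  intro v hv
  simp only [PGKey.allVars, Finset.mem_union]
  tauto

lemma x_mem_allVars (ψ : PGKey) : ψ.x ∈ ψ.allVars := by
  simp only [PGKey.allVars, Finset.mem_union, Finset.mem_singleton]
  tauto
lemma exclusive_equiv (ψ : PGKey) (hwf : ψ.wf CRPQeq) (hkw : ψ.kw = KW.exclusive)
    (σ : Var → Var) (hinj : Function.Injective σ) (hfresh : ∀ v, σ v ∉ ψ.allVars)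
    (G : PGraph) : ψ.sat G ↔ (exclusiveGGD ψ σ).sat G := by
  obtain ⟨-, -, -, -, hxQs, hxQt, hinter, hCs, hCt, hkeys⟩ := hwf
  rw [sat_exclusive_iff hkw, exclusiveGGD_reduced]
  constructor
  · -- ψ.sat → reduced GGD
    intro hpsi H hm hc
    simp only [exclusiveGGD] at hm hc
    rw [Match_append, Match_append, Match_append, Match_rename, Match_rename] at hm
    obtain ⟨⟨⟨hmQs, hmQs'⟩, hmQt⟩, hmQt'⟩ := hm
    rw [satC_append, satC_append, satC_append, satC_append,
      satC_map_rename, satC_map_rename] at hc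
    obtain ⟨⟨⟨⟨hcCs, hcCs'⟩, hcCt⟩, hcCt'⟩, hcK⟩ := hc
    refine hpsi H (fun v => H (σ v)) hmQs hcCs hmQs' hcCs' H (fun v => H (σ v))
      hmQt hcCt rfl hmQt' hcCt' rfl ?_ ?_ ?_
    · intro k hk
      cases k with
      | var v => simp [KeyExpr.eval]
      | ref v a =>
          have := hcK _ (List.mem_map.mpr ⟨_, hk, rfl⟩)
          simp only [keyEqPred, Pred.sat] at this
          obtain ⟨val, h1, -⟩ := this
          simp [KeyExpr.eval, h1]
    · intro k hk
      cases k with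
      | var v => simp [KeyExpr.eval]
      | ref v a =>
          have := hcK _ (List.mem_map.mpr ⟨_, hk, rfl⟩)
          simp only [keyEqPred, Pred.sat] at this
          obtain ⟨val, -, h2⟩ := this
          simp only [KeyExpr.eval]
          have : propOf G (fun w => H (σ w)) v a = propOf G H (σ v) a := rfl
          rw [this, h2]
          simp
    · intro k hk
      have hp := hcK _ (List.mem_map.mpr ⟨_, hk, rfl⟩)
      cases k with
      | var v =>
          simp only [keyEqPred, Pred.sat] at hp
          simp [KeyExpr.eval, hp]
      | ref v a =>
          simp only [keyEqPred, Pred.sat] at hp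
          obtain ⟨val, h1, h2⟩ := hp
          simp only [KeyExpr.eval]
          have h3 : propOf G (fun w => H (σ w)) v a = propOf G H (σ v) a := rfl
          rw [h1, h3, h2]
  · -- reduced GGD → ψ.sat
    intro hred hs hs' hmQs hcCs hmQs' hcCs' ht ht' hmt hct hxt hmt' hct' hxt' hd hd' hke
    classical
    set base : Var → Target := fun v => if v ∈ qvars ψ.Qt then ht v else hs v with hbase
    set base' : Var → Target := fun v => if v ∈ qvars ψ.Qt then ht' v else hs' v with hbase'
    set H : Var → Target := fun v => if hv : ∃ u, σ u = v then base' hv.choose else base v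
      with hHdef
    have hxeq : ∀ v, v ∈ qvars ψ.Qs → v ∈ qvars ψ.Qt → v = ψ.x := by
      intro v h1 h2
      have hmem : v ∈ qvars ψ.Qs ∩ qvars ψ.Qt := Finset.mem_inter.mpr ⟨h1, h2⟩
      rw [hinter] at hmem
      simpa using hmem
    have hHin : ∀ v ∈ ψ.allVars, H v = base v := by
      intro v hv
      rw [hHdef]
      dsimp only
      rw [dif_neg]
      rintro ⟨u, rfl⟩
      exact hfresh u hv
    have hHσ : ∀ u, H (σ u) = base' u := by
      intro u
      rw [hHdef]
      dsimp only
      rw [dif_pos ⟨u, rfl⟩]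
      congr 1
      exact hinj (⟨u, rfl⟩ : ∃ w, σ w = σ u).choose_spec
    have hbQs : ∀ v ∈ qvars ψ.Qs, base v = hs v := by
      intro v hv
      rw [hbase]
      dsimp only
      by_cases h : v ∈ qvars ψ.Qt
      · rw [if_pos h, hxeq v hv h, hxt]
      · rw [if_neg h]
    have hbQs' : ∀ v ∈ qvars ψ.Qs, base' v = hs' v := by
      intro v hv
      rw [hbase']
      dsimp only
      by_cases h : v ∈ qvars ψ.Qt
      · rw [if_pos h, hxeq v hv h, hxt']
      · rw [if_neg h]
    have hbQt : ∀ v ∈ qvars ψ.Qt, base v = ht v := by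
      intro v hv; rw [hbase]; dsimp only; rw [if_pos hv]
    have hbQt' : ∀ v ∈ qvars ψ.Qt, base' v = ht' v := by
      intro v hv; rw [hbase']; dsimp only; rw [if_pos hv]
    have hHQs : ∀ v ∈ qvars ψ.Qs, H v = hs v :=
      fun v hv => (hHin v (qvars_Qs_subset ψ hv)).trans (hbQs v hv)
    have hHQt : ∀ v ∈ qvars ψ.Qt, H v = ht v :=
      fun v hv => (hHin v (qvars_Qt_subset ψ hv)).trans (hbQt v hv)
    have hHσQs : ∀ v ∈ qvars ψ.Qs, H (σ v) = hs' v :=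
      fun v hv => (hHσ v).trans (hbQs' v hv)
    have hHσQt : ∀ v ∈ qvars ψ.Qt, H (σ v) = ht' v :=
      fun v hv => (hHσ v).trans (hbQt' v hv)
    have hmatch : Match G (exclusiveGGD ψ σ).Qs H := by
      simp only [exclusiveGGD]
      rw [Match_append, Match_append, Match_append, Match_rename, Match_rename]
      exact ⟨⟨⟨(Match_congr hHQs).mpr hmQs,
        (Match_congr fun v hv => hHσQs v hv).mpr hmQs'⟩,
        (Match_congr hHQt).mpr hmt⟩,
        (Match_congr fun v hv => hHσQt v hv).mpr hmt'⟩
    have hcons : satC G H (exclusiveGGD ψ σ).Cs := by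
      simp only [exclusiveGGD]
      rw [satC_append, satC_append, satC_append, satC_append,
        satC_map_rename, satC_map_rename]
      refine ⟨⟨⟨⟨?_, ?_⟩, ?_⟩, ?_⟩, ?_⟩
      · exact (satC_congr fun p hp v hv => hHQs v (hCs p hp hv)).mpr hcCs
      · exact (satC_congr fun p hp v hv => hHσQs v (hCs p hp hv)).mpr hcCs'
      · exact (satC_congr fun p hp v hv => hHQt v (hCt p hp hv)).mpr hct
      · exact (satC_congr fun p hp v hv => hHσQt v (hCt p hp hv)).mpr hct'
      · intro p hp
        obtain ⟨k, hk, rfl⟩ := List.mem_map.mp hp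
        have hkv : keyVar k ∈ qvars ψ.Qt :=
          hkeys k hk (by rw [KeyExpr.vars_eq]; simp)
        have he := hke k hk
        cases k with
        | var v =>
            simp only [KeyExpr.eval, Option.some.injEq, Sum.inl.injEq] at he
            simp only [keyEqPred, Pred.sat]
            rw [hHQt v hkv, hHσQt v hkv]
            exact he
        | ref v a =>
            have hdef := hd _ hk
            simp only [KeyExpr.eval, Option.isSome_map] at hdef
            obtain ⟨val, hval⟩ := Option.isSome_iff_exists.mp hdef
            simp only [KeyExpr.eval] at he
            have heq : propOf G ht v a = propOf G ht' v a :=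
              Option.map_injective Sum.inr_injective he
            simp only [keyEqPred, Pred.sat]
            refine ⟨val, ?_, ?_⟩
            · rw [propOf_congr a (hHQt v hkv), hval]
            · rw [propOf_congr' a (hHσQt v hkv), ← heq, hval]
    have hfin := hred H hmatch hcons
    rw [hHQs ψ.x hxQs, hHσQs ψ.x hxQs] at hfin
    exact hfin
lemma fixAt_self (x : Var) (σ : Var → Var) : fixAt x σ x = x := if_pos rfl

lemma fixAt_ne {x v : Var} (σ : Var → Var) (h : v ≠ x) : fixAt x σ v = σ v := if_neg h

lemma singleton_reduced (ψ : PGKey) (hwf : ψ.wf CRPQeq) (hkw : ψ.kw = KW.singleton)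
    (σ : Var → Var) (hinj : Function.Injective σ) (hfresh : ∀ v, σ v ∉ ψ.allVars)
    (G : PGraph) :
    ψ.sat G ↔
      ∀ H, Match G (singletonGGD ψ σ).Qs H → satC G H (singletonGGD ψ σ).Cs →
        satC G H (ψ.keys.map (keyEqPred (fixAt ψ.x σ))) := by
  obtain ⟨-, -, -, -, hxQs, hxQt, hinter, hCs, hCt, hkeys⟩ := hwf
  have hkvQt : ∀ k ∈ ψ.keys, keyVar k ∈ qvars ψ.Qt :=
    fun k hk => hkeys k hk (by rw [KeyExpr.vars_eq]; simp)
  rw [sat_singleton_iff hkw]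
  constructor
  · -- ψ.sat → reduced
    intro hpsi H hm hc
    simp only [singletonGGD] at hm hc
    rw [Match_append, Match_append, Match_rename] at hm
    obtain ⟨⟨hmQs, hmQt⟩, hmQt'⟩ := hm
    rw [satC_append, satC_append, satC_append, satC_append, satC_map_rename,
      exPreds_map_rename, satC_map_rename] at hc
    obtain ⟨⟨⟨⟨hcCs, hcCt⟩, hcCt'⟩, hcE⟩, hcE'⟩ := hc
    have hdH : keysDefined G H ψ.keys := keysDefined_iff_satC.mpr hcE
    have hdH' : keysDefined G (fun v => H (fixAt ψ.x σ v)) ψ.keys :=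
      keysDefined_iff_satC.mpr hcE'
    have hke := hpsi H hmQs hcCs H (fun v => H (fixAt ψ.x σ v)) hmQt hcCt rfl
      hmQt' hcCt' (show H (fixAt ψ.x σ ψ.x) = H ψ.x by rw [fixAt_self])
      hdH hdH'
    intro p hp
    obtain ⟨k, hk, rfl⟩ := List.mem_map.mp hp
    have he := hke k hk
    cases k with
    | var v =>
        simp only [KeyExpr.eval, Option.some.injEq, Sum.inl.injEq] at he
        exact he
    | ref v a =>
        simp only [KeyExpr.eval] at he
        have hdef := hdH _ hk
        simp only [KeyExpr.eval, Option.isSome_map] at hdef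
        obtain ⟨val, hval⟩ := Option.isSome_iff_exists.mp hdef
        have heq : propOf G H v a = propOf G (fun w => H (fixAt ψ.x σ w)) v a :=
          Option.map_injective Sum.inr_injective he
        simp only [keyEqPred, Pred.sat]
        refine ⟨val, hval, ?_⟩
        rw [show propOf G H (fixAt ψ.x σ v) a
            = propOf G (fun w => H (fixAt ψ.x σ w)) v a from rfl, ← heq, hval]
  · -- reduced → ψ.sat
    intro hred hs hmQs hcCs ht ht' hmt hct hxt hmt' hct' hxt' hd hd'
    classical
    set base : Var → Target := fun v => if v ∈ qvars ψ.Qt then ht v else hs v with hbase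
    set H : Var → Target :=
      fun v => if hv : ∃ u, u ≠ ψ.x ∧ σ u = v then ht' hv.choose else base v with hHdef
    have hxeq : ∀ v, v ∈ qvars ψ.Qs → v ∈ qvars ψ.Qt → v = ψ.x := by
      intro v h1 h2
      have hmem : v ∈ qvars ψ.Qs ∩ qvars ψ.Qt := Finset.mem_inter.mpr ⟨h1, h2⟩
      rw [hinter] at hmem
      simpa using hmem
    have hHin : ∀ v ∈ ψ.allVars, H v = base v := by
      intro v hv
      rw [hHdef]
      dsimp only
      rw [dif_neg]
      rintro ⟨u, -, rfl⟩
      exact hfresh u hv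
    have hbQs : ∀ v ∈ qvars ψ.Qs, base v = hs v := by
      intro v hv
      rw [hbase]
      dsimp only
      by_cases h : v ∈ qvars ψ.Qt
      · rw [if_pos h, hxeq v hv h, hxt]
      · rw [if_neg h]
    have hbQt : ∀ v ∈ qvars ψ.Qt, base v = ht v := by
      intro v hv; rw [hbase]; dsimp only; rw [if_pos hv]
    have hHQs : ∀ v ∈ qvars ψ.Qs, H v = hs v :=
      fun v hv => (hHin v (qvars_Qs_subset ψ hv)).trans (hbQs v hv)
    have hHQt : ∀ v ∈ qvars ψ.Qt, H v = ht v :=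
      fun v hv => (hHin v (qvars_Qt_subset ψ hv)).trans (hbQt v hv)
    have hHσ : ∀ v ∈ qvars ψ.Qt, H (fixAt ψ.x σ v) = ht' v := by
      intro v hv
      by_cases hu : v = ψ.x
      · subst hu
        rw [fixAt_self, hHin _ (x_mem_allVars ψ), hbQt _ hv, hxt, ← hxt']
      · rw [fixAt_ne σ hu, hHdef]
        dsimp only
        have hex : ∃ w, w ≠ ψ.x ∧ σ w = σ v := ⟨v, hu, rfl⟩
        rw [dif_pos hex]
        congr 1
        exact hinj hex.choose_spec.2
    have hmatch : Match G (singletonGGD ψ σ).Qs H := by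
      simp only [singletonGGD]
      rw [Match_append, Match_append, Match_rename]
      exact ⟨⟨(Match_congr hHQs).mpr hmQs, (Match_congr hHQt).mpr hmt⟩,
        (Match_congr fun v hv => hHσ v hv).mpr hmt'⟩
    have hcons : satC G H (singletonGGD ψ σ).Cs := by
      simp only [singletonGGD]
      rw [satC_append, satC_append, satC_append, satC_append, satC_map_rename,
        exPreds_map_rename, satC_map_rename]
      refine ⟨⟨⟨⟨?_, ?_⟩, ?_⟩, ?_⟩, ?_⟩
      · exact (satC_congr fun p hp v hv => hHQs v (hCs p hp hv)).mpr hcCs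
      · exact (satC_congr fun p hp v hv => hHQt v (hCt p hp hv)).mpr hct
      · exact (satC_congr fun p hp v hv => hHσ v (hCt p hp hv)).mpr hct'
      · refine keysDefined_iff_satC.mp ?_
        intro k hk
        rw [KeyExpr.eval_congr (h' := ht) ?_]
        · exact hd k hk
        · intro v hv
          rw [KeyExpr.vars_eq] at hv
          simp only [Finset.mem_singleton] at hv
          subst hv
          exact hHQt _ (hkvQt k hk)
      · refine keysDefined_iff_satC.mp ?_
        intro k hk
        rw [KeyExpr.eval_congr (h' := ht') ?_]
        · exact hd' k hk
        · intro v hv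
          rw [KeyExpr.vars_eq] at hv
          simp only [Finset.mem_singleton] at hv
          subst hv
          exact hHσ _ (hkvQt k hk)
    have hfin := hred H hmatch hcons
    intro k hk
    have hp := hfin _ (List.mem_map.mpr ⟨k, hk, rfl⟩)
    cases k with
    | var v =>
        simp only [keyEqPred, Pred.sat] at hp
        have h1 : H v = ht v := hHQt v (hkvQt _ hk)
        have h2 : H (fixAt ψ.x σ v) = ht' v := hHσ v (hkvQt _ hk)
        simp only [KeyExpr.eval, Option.some.injEq, Sum.inl.injEq]
        rw [← h1, ← h2, hp]
    | ref v a =>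
        simp only [keyEqPred, Pred.sat] at hp
        obtain ⟨val, h1, h2⟩ := hp
        have e1 : propOf G ht v a = some val := by
          rw [propOf_congr a (hHQt v (hkvQt _ hk)).symm, h1]
        have e2 : propOf G ht' v a = some val := by
          rw [← propOf_congr' a (hHσ v (hkvQt _ hk)), h2]
        simp only [KeyExpr.eval, e1, e2]
lemma singleton_equiv (ψ : PGKey) (hwf : ψ.wf CRPQeq) (hkw : ψ.kw = KW.singleton)
    (σ : Var → Var) (hinj : Function.Injective σ) (hfresh : ∀ v, σ v ∉ ψ.allVars)
    (G : PGraph) : ψ.sat G ↔ (singletonGGD ψ σ).sat G := by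
  rw [singleton_reduced ψ hwf hkw σ hinj hfresh G, singletonGGD_reduced]
  exact Iff.rfl

lemma singleton_perkey (ψ : PGKey) (hwf : ψ.wf CRPQeq) (hkw : ψ.kw = KW.singleton)
    (σ : Var → Var) (hinj : Function.Injective σ) (hfresh : ∀ v, σ v ∉ ψ.allVars)
    (G : PGraph) : ψ.sat G ↔ ∀ k ∈ ψ.keys, (singletonGGD1 ψ σ k).sat G := by
  rw [singleton_reduced ψ hwf hkw σ hinj hfresh G]
  constructor
  · intro hA k hk
    rw [singletonGGD1_reduced]
    intro h hm hc
    exact hA h hm hc _ (List.mem_map.mpr ⟨k, hk, rfl⟩)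
  · intro hA h hm hc p hp
    obtain ⟨k, hk, rfl⟩ := List.mem_map.mp hp
    exact (singletonGGD1_reduced ψ σ k G).mp (hA k hk) h hm hc

lemma keyVarList_eq (ks : List KeyExpr) : keyVarList ks = ks.map keyVar := by
  induction ks with
  | nil => rfl
  | cons k ks ih => cases k <;> simp [keyVarList, keyVar] at * <;> exact ih

lemma mem_keyVarList {v : Var} {ks : List KeyExpr} :
    v ∈ keyVarList ks ↔ ∃ k ∈ ks, keyVar k = v := by
  rw [keyVarList_eq]
  simp [List.mem_map]

lemma mandatoryGGD_wf {ψ : PGKey} (hwf : ψ.wf CRPQeq) : (mandatoryGGD ψ).wf CRPQeq := by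
  obtain ⟨-, -, h3, h4, hxQs, hxQt, hinter, hCs, hCt, hkeys⟩ := hwf
  refine ⟨QueryIn_CRPQeq _, QueryIn_CRPQeq _, h3, ?_, ?_, ?_, hCs, ?_⟩
  · intro p hp
    rcases List.mem_append.mp hp with h | h
    · exact h4 p h
    · exact exPreds_isEq h
  · intro v hv
    have hv' : v ∈ [ψ.x].toFinset := hv
    simp only [List.toFinset_cons, List.toFinset_nil, insert_empty_eq,
      Finset.mem_singleton] at hv'
    subst hv'
    exact hxQs
  · intro v hv
    have hv' : v ∈ qvars ψ.Qs ∩ qvars ψ.Qt := hv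
    rw [hinter] at hv'
    simpa [mandatoryGGD] using hv'
  · intro p hp v hv
    show v ∈ qvars ψ.Qt ∪ [ψ.x].toFinset
    rcases List.mem_append.mp hp with h | h
    · exact Finset.mem_union_left _ (hCt p h hv)
    · obtain ⟨w, a, hk, rfl⟩ := mem_exPreds.mp h
      simp only [Pred.vars, Finset.mem_singleton] at hv
      subst hv
      exact Finset.mem_union_left _ (hkeys _ hk (by simp [KeyExpr.vars]))

lemma exclusiveGGD_wf {ψ : PGKey} (hwf : ψ.wf CRPQeq) (σ : Var → Var) :
    (exclusiveGGD ψ σ).wf CRPQeq := by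
  obtain ⟨-, -, h3, h4, hxQs, hxQt, hinter, hCs, hCt, hkeys⟩ := hwf
  have hQ : qvars (exclusiveGGD ψ σ).Qs
      = qvars ψ.Qs ∪ (qvars ψ.Qs).image σ ∪ qvars ψ.Qt ∪ (qvars ψ.Qt).image σ := by
    simp only [exclusiveGGD, qvars_append, qvars_rename]
  refine ⟨QueryIn_CRPQeq _, QueryIn_CRPQeq _, ?_, ?_, ?_, ?_, ?_, ?_⟩
  · intro p hp
    rcases List.mem_append.mp hp with hp | hp
    · rcases List.mem_append.mp hp with hp | hp
      · rcases List.mem_append.mp hp with hp | hp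
        · rcases List.mem_append.mp hp with hp | hp
          · exact h3 p hp
          · obtain ⟨q, hq, rfl⟩ := List.mem_map.mp hp
            exact Pred.isEq_rename (h3 q hq)
        · exact h4 p hp
      · obtain ⟨q, hq, rfl⟩ := List.mem_map.mp hp
        exact Pred.isEq_rename (h4 q hq)
    · obtain ⟨k, hk, rfl⟩ := List.mem_map.mp hp
      exact keyEqPred_isEq σ k
  · intro p hp
    have hp' : p ∈ [Pred.idEq ψ.x (σ ψ.x)] := hp
    simp only [List.mem_singleton] at hp'
    subst hp'
    trivial
  · intro v hv
    have hv' : v ∈ [ψ.x, σ ψ.x].toFinset := hv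
    simp only [List.toFinset_cons, List.toFinset_nil, insert_empty_eq,
      Finset.mem_insert, Finset.mem_singleton] at hv'
    show v ∈ qvars (exclusiveGGD ψ σ).Qs
    rw [hQ]
    simp only [Finset.mem_union, Finset.mem_image]
    rcases hv' with rfl | rfl
    · exact Or.inl (Or.inl (Or.inl hxQs))
    · exact Or.inl (Or.inl (Or.inr ⟨ψ.x, hxQs, rfl⟩))
  · intro v hv
    have hv' : v ∈ qvars (exclusiveGGD ψ σ).Qs ∩ qvars ([] : Query) := hv
    simp [qvars_nil] at hv'
  · intro p hp v hv
    show v ∈ qvars (exclusiveGGD ψ σ).Qs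
    rw [hQ]
    simp only [Finset.mem_union, Finset.mem_image]
    rcases List.mem_append.mp hp with hp | hp
    · rcases List.mem_append.mp hp with hp | hp
      · rcases List.mem_append.mp hp with hp | hp
        · rcases List.mem_append.mp hp with hp | hp
          · exact Or.inl (Or.inl (Or.inl (hCs p hp hv)))
          · obtain ⟨q, hq, rfl⟩ := List.mem_map.mp hp
            rw [Pred.vars_rename] at hv
            obtain ⟨w, hw, rfl⟩ := Finset.mem_image.mp hv
            exact Or.inl (Or.inl (Or.inr ⟨w, hCs q hq hw, rfl⟩))
        · exact Or.inl (Or.inr (hCt p hp hv))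
      · obtain ⟨q, hq, rfl⟩ := List.mem_map.mp hp
        rw [Pred.vars_rename] at hv
        obtain ⟨w, hw, rfl⟩ := Finset.mem_image.mp hv
        exact Or.inr ⟨w, hCt q hq hw, rfl⟩
    · obtain ⟨k, hk, rfl⟩ := List.mem_map.mp hp
      rw [keyEqPred_vars] at hv
      have hkv : keyVar k ∈ qvars ψ.Qt := hkeys k hk (by rw [KeyExpr.vars_eq]; simp)
      simp only [Finset.mem_insert, Finset.mem_singleton] at hv
      rcases hv with rfl | rfl
      · exact Or.inl (Or.inr hkv)
      · exact Or.inr ⟨keyVar k, hkv, rfl⟩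
  · intro p hp v hv
    have hp' : p ∈ [Pred.idEq ψ.x (σ ψ.x)] := hp
    simp only [List.mem_singleton] at hp'
    subst hp'
    simp only [Pred.vars, Finset.mem_insert, Finset.mem_singleton] at hv
    refine Finset.mem_union_right _ ?_
    show v ∈ [ψ.x, σ ψ.x].toFinset
    simp only [List.toFinset_cons, List.toFinset_nil, insert_empty_eq,
      Finset.mem_insert, Finset.mem_singleton]
    exact hv
lemma singleton_qvars (ψ : PGKey) (σ : Var → Var) :
    qvars (singletonGGD ψ σ).Qs
      = qvars ψ.Qs ∪ qvars ψ.Qt ∪ (qvars ψ.Qt).image (fixAt ψ.x σ) := by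
  simp only [singletonGGD, qvars_append, qvars_rename]

lemma singleton_predsIn {ψ : PGKey} (hwf : ψ.wf CRPQeq) (σ : Var → Var) :
    PredsIn CRPQeq (singletonGGD ψ σ).Cs := by
  obtain ⟨-, -, h3, h4, -, -, -, -, -, -⟩ := hwf
  intro p hp
  rcases List.mem_append.mp hp with hp | hp
  · rcases List.mem_append.mp hp with hp | hp
    · rcases List.mem_append.mp hp with hp | hp
      · rcases List.mem_append.mp hp with hp | hp
        · exact h3 p hp
        · exact h4 p hp
      · obtain ⟨q, hq, rfl⟩ := List.mem_map.mp hp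
        exact Pred.isEq_rename (h4 q hq)
    · exact exPreds_isEq hp
  · exact exPreds_isEq hp

lemma singleton_srcVars {ψ : PGKey} (hwf : ψ.wf CRPQeq) (σ : Var → Var) :
    ∀ p ∈ (singletonGGD ψ σ).Cs, p.vars ⊆ qvars (singletonGGD ψ σ).Qs := by
  obtain ⟨-, -, -, -, hxQs, hxQt, hinter, hCs, hCt, hkeys⟩ := hwf
  intro p hp v hv
  rw [singleton_qvars]
  simp only [Finset.mem_union, Finset.mem_image]
  rcases List.mem_append.mp hp with hp | hp
  · rcases List.mem_append.mp hp with hp | hp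
    · rcases List.mem_append.mp hp with hp | hp
      · rcases List.mem_append.mp hp with hp | hp
        · exact Or.inl (Or.inl (hCs p hp hv))
        · exact Or.inl (Or.inr (hCt p hp hv))
      · obtain ⟨q, hq, rfl⟩ := List.mem_map.mp hp
        rw [Pred.vars_rename] at hv
        obtain ⟨w, hw, rfl⟩ := Finset.mem_image.mp hv
        exact Or.inr ⟨w, hCt q hq hw, rfl⟩
    · obtain ⟨w, a, hk, rfl⟩ := mem_exPreds.mp hp
      simp only [Pred.vars, Finset.mem_singleton] at hv
      subst hv
      exact Or.inl (Or.inr (hkeys _ hk (by simp [KeyExpr.vars])))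
  · rw [exPreds_map_rename] at hp
    obtain ⟨q, hq, rfl⟩ := List.mem_map.mp hp
    rw [Pred.vars_rename] at hv
    obtain ⟨w, hw, rfl⟩ := Finset.mem_image.mp hv
    obtain ⟨u, a, hk, rfl⟩ := mem_exPreds.mp hq
    simp only [Pred.vars, Finset.mem_singleton] at hw
    refine Or.inr ⟨w, ?_, rfl⟩
    rw [hw]
    exact hkeys _ hk (by simp [KeyExpr.vars])

lemma singletonGGD_wf {ψ : PGKey} (hwf : ψ.wf CRPQeq) (σ : Var → Var) :
    (singletonGGD ψ σ).wf CRPQeq := by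
  have hkeys := hwf.2.2.2.2.2.2.2.2.2
  have hxQt := hwf.2.2.2.2.2.1
  refine ⟨QueryIn_CRPQeq _, QueryIn_CRPQeq _, singleton_predsIn hwf σ, ?_, ?_, ?_,
    singleton_srcVars hwf σ, ?_⟩
  · intro p hp
    obtain ⟨k, hk, rfl⟩ := List.mem_map.mp hp
    exact keyEqPred_isEq _ k
  · intro v hv
    have hv' : v ∈ (keyVarList ψ.keys ++ (keyVarList ψ.keys).map (fixAt ψ.x σ)).toFinset := hv
    rw [List.toFinset_append, Finset.mem_union] at hv'
    rw [singleton_qvars]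
    simp only [Finset.mem_union, Finset.mem_image]
    rcases hv' with hv' | hv'
    · rw [List.mem_toFinset] at hv'
      obtain ⟨k, hk, rfl⟩ := mem_keyVarList.mp hv'
      exact Or.inl (Or.inr (hkeys k hk (by rw [KeyExpr.vars_eq]; simp)))
    · rw [List.mem_toFinset, List.mem_map] at hv'
      obtain ⟨w, hw, rfl⟩ := hv'
      obtain ⟨k, hk, rfl⟩ := mem_keyVarList.mp hw
      exact Or.inr ⟨keyVar k, hkeys k hk (by rw [KeyExpr.vars_eq]; simp), rfl⟩
  · intro v hv
    have hv' : v ∈ qvars (singletonGGD ψ σ).Qs ∩ qvars ([] : Query) := hv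
    simp [qvars_nil] at hv'
  · intro p hp v hv
    obtain ⟨k, hk, rfl⟩ := List.mem_map.mp hp
    rw [keyEqPred_vars] at hv
    simp only [Finset.mem_insert, Finset.mem_singleton] at hv
    refine Finset.mem_union_right _ ?_
    show v ∈ (keyVarList ψ.keys ++ (keyVarList ψ.keys).map (fixAt ψ.x σ)).toFinset
    rw [List.toFinset_append, Finset.mem_union]
    rcases hv with rfl | rfl
    · exact Or.inl (List.mem_toFinset.mpr (keyVar_mem_keyVarList hk))
    · exact Or.inr (List.mem_toFinset.mpr
        (List.mem_map.mpr ⟨keyVar k, keyVar_mem_keyVarList hk, rfl⟩))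

lemma singletonGGD1_wf {ψ : PGKey} (hwf : ψ.wf CRPQeq) (σ : Var → Var)
    {k : KeyExpr} (hk : k ∈ ψ.keys) : (singletonGGD1 ψ σ k).wf CRPQeq := by
  have hkeys := hwf.2.2.2.2.2.2.2.2.2
  refine ⟨QueryIn_CRPQeq _, QueryIn_CRPQeq _, singleton_predsIn hwf σ, ?_, ?_, ?_,
    singleton_srcVars hwf σ, ?_⟩
  · intro p hp
    have hp' : p ∈ [keyEqPred (fixAt ψ.x σ) k] := hp
    simp only [List.mem_singleton] at hp'
    subst hp'
    exact keyEqPred_isEq _ k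
  · intro v hv
    have hv' : v ∈ [keyVar k, fixAt ψ.x σ (keyVar k)].toFinset := hv
    simp only [List.toFinset_cons, List.toFinset_nil, insert_empty_eq,
      Finset.mem_insert, Finset.mem_singleton] at hv'
    have hkv : keyVar k ∈ qvars ψ.Qt := hkeys k hk (by rw [KeyExpr.vars_eq]; simp)
    show v ∈ qvars (singletonGGD ψ σ).Qs
    rw [singleton_qvars]
    simp only [Finset.mem_union, Finset.mem_image]
    rcases hv' with rfl | rfl
    · exact Or.inl (Or.inr hkv)
    · exact Or.inr ⟨keyVar k, hkv, rfl⟩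
  · intro v hv
    have hv' : v ∈ qvars (singletonGGD ψ σ).Qs ∩ qvars ([] : Query) := hv
    simp [qvars_nil] at hv'
  · intro p hp v hv
    have hp' : p ∈ [keyEqPred (fixAt ψ.x σ) k] := hp
    simp only [List.mem_singleton] at hp'
    subst hp'
    rw [keyEqPred_vars] at hv
    refine Finset.mem_union_right _ ?_
    show v ∈ [keyVar k, fixAt ψ.x σ (keyVar k)].toFinset
    simp only [List.toFinset_cons, List.toFinset_nil, insert_empty_eq,
      Finset.mem_insert, Finset.mem_singleton] at hv ⊢
    exact hv
/-- over CRPQ[=], PG-Keys ⊆ GGD (indeed 2GGD), via the concrete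
translations for the three assertion keywords. -/
theorem pgkeys_sub_ggd_crpq_eq :
    ClassLE (PGKc CRPQeq) (GGDc CRPQeq) ∧
    ClassLE (PGKc CRPQeq) (nGGDc 2 CRPQeq) ∧
    (∀ ψ : PGKey, ψ.wf CRPQeq →
      ∀ σ : Var → Var, Function.Injective σ → (∀ v, σ v ∉ ψ.allVars) →
        (ψ.kw = KW.mandatory →
          (mandatoryGGD ψ).shared.length ≤ 1 ∧
          ∀ G, ψ.sat G ↔ (mandatoryGGD ψ).sat G) ∧
        (ψ.kw = KW.exclusive → ∀ G, ψ.sat G ↔ (exclusiveGGD ψ σ).sat G) ∧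
        (ψ.kw = KW.singleton → ∀ G, ψ.sat G ↔ (singletonGGD ψ σ).sat G)) := by
  refine ⟨?_, ?_, ?_⟩
  · rintro s ⟨ψ, hwf, rfl⟩
    obtain ⟨σ, hinj, hfresh⟩ := exists_fresh ψ
    cases hkw : ψ.kw with
    | mandatory =>
        refine ⟨[(mandatoryGGD ψ).sat], ?_, ?_⟩
        · intro t ht
          simp only [List.mem_singleton] at ht
          subst ht
          exact ⟨mandatoryGGD ψ, mandatoryGGD_wf hwf, rfl⟩
        · intro G
          simpa using mandatory_equiv ψ hkw G
    | exclusive =>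
        refine ⟨[(exclusiveGGD ψ σ).sat], ?_, ?_⟩
        · intro t ht
          simp only [List.mem_singleton] at ht
          subst ht
          exact ⟨exclusiveGGD ψ σ, exclusiveGGD_wf hwf σ, rfl⟩
        · intro G
          simpa using exclusive_equiv ψ hwf hkw σ hinj hfresh G
    | singleton =>
        refine ⟨[(singletonGGD ψ σ).sat], ?_, ?_⟩
        · intro t ht
          simp only [List.mem_singleton] at ht
          subst ht
          exact ⟨singletonGGD ψ σ, singletonGGD_wf hwf σ, rfl⟩
        · intro G
          simpa using singleton_equiv ψ hwf hkw σ hinj hfresh G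
  · rintro s ⟨ψ, hwf, rfl⟩
    obtain ⟨σ, hinj, hfresh⟩ := exists_fresh ψ
    cases hkw : ψ.kw with
    | mandatory =>
        refine ⟨[(mandatoryGGD ψ).sat], ?_, ?_⟩
        · intro t ht
          simp only [List.mem_singleton] at ht
          subst ht
          exact ⟨mandatoryGGD ψ, mandatoryGGD_wf hwf,
            by norm_num [mandatoryGGD], rfl⟩
        · intro G
          simpa using mandatory_equiv ψ hkw G
    | exclusive =>
        refine ⟨[(exclusiveGGD ψ σ).sat], ?_, ?_⟩
        · intro t ht
          simp only [List.mem_singleton] at ht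
          subst ht
          exact ⟨exclusiveGGD ψ σ, exclusiveGGD_wf hwf σ,
            by norm_num [exclusiveGGD], rfl⟩
        · intro G
          simpa using exclusive_equiv ψ hwf hkw σ hinj hfresh G
    | singleton =>
        refine ⟨ψ.keys.map fun k => (singletonGGD1 ψ σ k).sat, ?_, ?_⟩
        · intro t ht
          obtain ⟨k, hk, rfl⟩ := List.mem_map.mp ht
          exact ⟨singletonGGD1 ψ σ k, singletonGGD1_wf hwf σ hk,
            by norm_num [singletonGGD1], rfl⟩
        · intro G
          rw [singleton_perkey ψ hwf hkw σ hinj hfresh G]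
          constructor
          · intro hA t ht
            obtain ⟨k, hk, rfl⟩ := List.mem_map.mp ht
            exact hA k hk
          · intro hA k hk
            exact hA _ (List.mem_map.mpr ⟨k, hk, rfl⟩)
  · intro ψ hwf σ hinj hfresh
    exact ⟨fun hkw => ⟨by norm_num [mandatoryGGD],
        fun G => mandatory_equiv ψ hkw G⟩,
      fun hkw G => exclusive_equiv ψ hwf hkw σ hinj hfresh G,
      fun hkw G => singleton_equiv ψ hwf hkw σ hinj hfresh G⟩

end PGC
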